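/- arXiv:1402.1891 — 2 statements merged into one kernel-verified Lean document; each statement's English description precedes it below -/
import Mathlib

section
/- Let H be a Hopf algebra with invertible antipode, A a right H-comodule algebra with coinvariant subalgebra B, and f: H → A a total integral which is an algebra map (so f is convolution invertible with f^{-1} = f∘S). Then the formula a·h = f^{-1}(h(1)) a f(h(2)) defines a unital associative right H-module structure on A, and the centralizer A^B = {a ∈ A : ab = ba for all b ∈ B} is a right H-submodule for this action. -/
open TensorProduct LinearMap

noncomputable section

variable {k H A M : Type*} [Field k] [Ring H] [HopfAlgebra k H]
  [Ring A] [Algebra k A] [AddCommGroup M] [Module k M]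

local notation "Δ" => (Coalgebra.comul (R := k) (A := H))
local notation "εH" => (Coalgebra.counit (R := k) (A := H))
local notation "𝒮" => (HopfAlgebra.antipode (R := k) (A := H))
local notation "mulH" => (LinearMap.mul' k H)
local notation "mulA" => (LinearMap.mul' k A)

/-- Right-hand side of the right-right (anti) Yetter-Drinfeld compatibility:
`m ⊗ h ↦ act (m₍₀₎ ⊗ h⑵) ⊗ s h⑴ * m₍₁₎ * h⑶`, where the comultiplication of `H` is `Dh`,
its multiplication is `mH` and `s` plays the role of the (inverse of the) antipode. -/
def ydRhs (mH : H ⊗[k] H →ₗ[k] H) (Dh : H →ₗ[k] H ⊗[k] H) (s : H →ₗ[k] H)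
    (act : M ⊗[k] H →ₗ[k] M) (ρM : M →ₗ[k] M ⊗[k] H) : M ⊗[k] H →ₗ[k] M ⊗[k] H :=
  lTensor M (mH ∘ₗ TensorProduct.map s mH) ∘ₗ
  (TensorProduct.assoc k M H (H ⊗[k] H)).toLinearMap ∘ₗ
  rTensor (H ⊗[k] H) (rTensor H act ∘ₗ (TensorProduct.assoc k M H H).symm.toLinearMap ∘ₗ
      lTensor M (TensorProduct.comm k H H).toLinearMap) ∘ₗ
  (tensorTensorTensorComm k M H (H ⊗[k] H) H).toLinearMap ∘ₗ
  TensorProduct.map ρM (rTensor H Dh ∘ₗ Dh)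

/-- Right-hand side of the left-right anti-Yetter-Drinfeld compatibility:
`h ⊗ m ↦ act (h⑵ ⊗ m₍₀₎) ⊗ h⑶ * m₍₁₎ * s h⑴`. -/
def aydLRRhs (mH : H ⊗[k] H →ₗ[k] H) (Dh : H →ₗ[k] H ⊗[k] H) (s : H →ₗ[k] H)
    (act : H ⊗[k] M →ₗ[k] M) (ρM : M →ₗ[k] M ⊗[k] H) : H ⊗[k] M →ₗ[k] M ⊗[k] H :=
  TensorProduct.map act
      (mH ∘ₗ lTensor H mH ∘ₗ lTensor H (lTensor H s) ∘ₗ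
        lTensor H (TensorProduct.comm k H H).toLinearMap ∘ₗ
        (TensorProduct.assoc k H H H).toLinearMap) ∘ₗ
  (tensorTensorTensorComm k H (H ⊗[k] H) M H).toLinearMap ∘ₗ
  TensorProduct.map
    ((TensorProduct.assoc k H H H).toLinearMap ∘ₗ
      (TensorProduct.comm k H (H ⊗[k] H)).toLinearMap ∘ₗ lTensor H Dh ∘ₗ Dh) ρM

/-- Right-hand side of the right-left anti-Yetter-Drinfeld compatibility:
`m ⊗ h ↦ s h⑶ * m₍₋₁₎ * h⑴ ⊗ act (m₍₀₎ ⊗ h⑵)`. -/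
def aydRLRhs (mH : H ⊗[k] H →ₗ[k] H) (Dh : H →ₗ[k] H ⊗[k] H) (s : H →ₗ[k] H)
    (act : M ⊗[k] H →ₗ[k] M) (lρ : M →ₗ[k] H ⊗[k] M) : M ⊗[k] H →ₗ[k] H ⊗[k] M :=
  rTensor M (mH ∘ₗ (TensorProduct.comm k H H).toLinearMap ∘ₗ lTensor H s) ∘ₗ
  (TensorProduct.assoc k H H M).symm.toLinearMap ∘ₗ
  lTensor H (TensorProduct.comm k M H).toLinearMap ∘ₗ
  TensorProduct.map mH (rTensor H act ∘ₗ (TensorProduct.assoc k M H H).symm.toLinearMap) ∘ₗ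
  (tensorTensorTensorComm k H M H (H ⊗[k] H)).toLinearMap ∘ₗ
  TensorProduct.map lρ (lTensor H Dh ∘ₗ Dh)

/-- `sandwich p q (a ⊗ (x ⊗ y)) = p x * a * q y`. -/
def sandwich (p q : H →ₗ[k] A) : A ⊗[k] (H ⊗[k] H) →ₗ[k] A :=
  mulA ∘ₗ TensorProduct.map (mulA ∘ₗ TensorProduct.map p LinearMap.id) q ∘ₗ
    rTensor H (TensorProduct.comm k A H).toLinearMap ∘ₗ
    (TensorProduct.assoc k A H H).symm.toLinearMap

/-- The right `H`-action `a · h = g h⑴ * a * f h⑵` attached to a total integral `f` with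
convolution inverse `g`. -/
def intAct (Dh : H →ₗ[k] H ⊗[k] H) (f g : H →ₗ[k] A) : A ⊗[k] H →ₗ[k] A :=
  sandwich g f ∘ₗ lTensor A Dh

/-- The left `H`-action `h · a = f h⑵ * a * g h⑴`. -/
def intActL (Dh : H →ₗ[k] H ⊗[k] H) (f g : H →ₗ[k] A) : H ⊗[k] A →ₗ[k] A :=
  sandwich f g ∘ₗ lTensor A ((TensorProduct.comm k H H).toLinearMap ∘ₗ Dh) ∘ₗ
    (TensorProduct.comm k H A).toLinearMap

/-- The set of coinvariants `B = {a | ρ a = a ⊗ 1}`. -/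
def coinv (ρA : A →ₗ[k] A ⊗[k] H) : Set A := {a : A | ρA a = a ⊗ₜ[k] (1 : H)}

/-- The canonical Galois map `A ⊗ A → A ⊗ H`, `a ⊗ a' ↦ a * a'₍₀₎ ⊗ a'₍₁₎`. -/
def canMap (ρA : A →ₗ[k] A ⊗[k] H) : A ⊗[k] A →ₗ[k] A ⊗[k] H :=
  rTensor H mulA ∘ₗ (TensorProduct.assoc k A A H).symm.toLinearMap ∘ₗ lTensor A ρA

/-- The kernel of `A ⊗ A → A ⊗_B A`: the span of the elements `(a*b) ⊗ a' - a ⊗ (b*a')`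
with `b` a coinvariant; so `A ⊗_B A = (A ⊗ A) ⧸ galRel ρA`. -/
def galRel (ρA : A →ₗ[k] A ⊗[k] H) : Submodule k (A ⊗[k] A) :=
  Submodule.span k {x : A ⊗[k] A |
    ∃ a a' b : A, b ∈ coinv ρA ∧ x = (a * b) ⊗ₜ[k] a' - a ⊗ₜ[k] (b * a')}

/-- The span of the commutators `[A, B]`, `B` the coinvariants; `A_B = A ⧸ commSub ρA`. -/
def commSub (ρA : A →ₗ[k] A ⊗[k] H) : Submodule k A :=
  Submodule.span k {x : A | ∃ a b : A, b ∈ coinv ρA ∧ x = a * b - b * a}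

/-- `δ(h⑴) • s h⑵`, the twisted antipode. -/
def twistS (δl : H →ₗ[k] k) (s : H →ₗ[k] H) (Dh : H →ₗ[k] H ⊗[k] H) : H →ₗ[k] H :=
  (TensorProduct.lid k H).toLinearMap ∘ₗ TensorProduct.map δl s ∘ₗ Dh

section Aux

open Coalgebra

variable {A' A'' : Type*} [Ring A'] [Algebra k A'] [Ring A''] [Algebra k A'']

/-- Convolution product on `Hom(H, A')`. -/
noncomputable def cnv (φ ψ : H →ₗ[k] A') : H →ₗ[k] A' :=
  LinearMap.mul' k A' ∘ₗ TensorProduct.map φ ψ ∘ₗ Δ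

/-- Convolution unit on `Hom(H, A')`. -/
noncomputable def cnvOne : H →ₗ[k] A' := Algebra.linearMap k A' ∘ₗ εH

lemma cnv_apply (φ ψ : H →ₗ[k] A') (x : H) {ι : Type*} (r : Coalgebra.Repr k x ι) :
    cnv φ ψ x = ∑ i ∈ r.index, φ (r.left i) * ψ (r.right i) := by
  simp only [cnv, LinearMap.comp_apply, ← r.eq, map_sum, TensorProduct.map_tmul,
    LinearMap.mul'_apply]

lemma cnvOne_apply (x : H) : (cnvOne : H →ₗ[k] A') x = εH x • (1 : A') := by
  simp [cnvOne, Algebra.algebraMap_eq_smul_one]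

lemma repr_smul_left {x : H} {ι : Type*} (r : Coalgebra.Repr k x ι) :
    ∑ i ∈ r.index, εH (r.right i) • r.left i = x := by
  have h := congrArg (TensorProduct.rid k H) (Coalgebra.sum_tmul_counit_eq (R := k) r)
  rw [map_sum] at h
  simp only [TensorProduct.rid_tmul, one_smul] at h
  exact h

lemma repr_smul_right {x : H} {ι : Type*} (r : Coalgebra.Repr k x ι) :
    ∑ i ∈ r.index, εH (r.left i) • r.right i = x := by
  have h := congrArg (TensorProduct.lid k H) (Coalgebra.sum_counit_tmul_eq (R := k) r)
  rw [map_sum] at h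
  simp only [TensorProduct.lid_tmul, one_smul] at h
  exact h

lemma cnv_cnvOne_right (φ : H →ₗ[k] A') : cnv φ cnvOne = φ := by
  ext x
  rw [cnv_apply _ _ x (ℛ k x)]
  simp only [cnvOne_apply, mul_smul_comm, mul_one]
  simp only [← map_smul, ← map_sum, repr_smul_left]

lemma cnv_cnvOne_left (ψ : H →ₗ[k] A') : cnv cnvOne ψ = ψ := by
  ext x
  rw [cnv_apply _ _ x (ℛ k x)]
  simp only [cnvOne_apply, smul_mul_assoc, one_mul]
  simp only [← map_smul, ← map_sum, repr_smul_right]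

lemma cnv_assoc (φ ψ χ : H →ₗ[k] A') : cnv (cnv φ ψ) χ = cnv φ (cnv ψ χ) := by
  ext x
  set r := ℛ k x with hrdef
  set a₁ : ∀ i, Coalgebra.Repr k (r.left i) (H × H) := fun i => ℛ k (r.left i) with ha₁
  set a₂ : ∀ i, Coalgebra.Repr k (r.right i) (H × H) := fun i => ℛ k (r.right i) with ha₂
  have key := congrArg (LinearMap.mul' k A' ∘ₗ lTensor A' (LinearMap.mul' k A'))
    (Coalgebra.sum_map_tmul_tmul_eq (R := k) φ ψ χ x (repr := r) (a₁ := a₁) (a₂ := a₂))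
  simp only [map_sum, LinearMap.comp_apply, lTensor_tmul, LinearMap.mul'_apply] at key
  have hl : cnv (cnv φ ψ) χ x
      = ∑ i ∈ r.index, ∑ j ∈ (a₁ i).index,
        φ ((a₁ i).left j) * (ψ ((a₁ i).right j) * χ (r.right i)) := by
    rw [cnv_apply _ _ x r]
    refine Finset.sum_congr rfl fun i _ => ?_
    rw [cnv_apply _ _ _ (a₁ i), Finset.sum_mul]
    simp only [mul_assoc]
  have hr' : cnv φ (cnv ψ χ) x
      = ∑ i ∈ r.index, ∑ j ∈ (a₂ i).index,
        φ (r.left i) * (ψ ((a₂ i).left j) * χ ((a₂ i).right j)) := by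
    rw [cnv_apply _ _ x r]
    refine Finset.sum_congr rfl fun i _ => ?_
    rw [cnv_apply _ _ _ (a₂ i), Finset.mul_sum]
  rw [hl, hr']
  exact key.symm

lemma cnv_add_left (φ φ' ψ : H →ₗ[k] A') : cnv (φ + φ') ψ = cnv φ ψ + cnv φ' ψ := by
  ext x
  simp only [LinearMap.add_apply, cnv_apply _ _ x (ℛ k x), add_mul, Finset.sum_add_distrib]

lemma cnv_add_right (φ ψ ψ' : H →ₗ[k] A') : cnv φ (ψ + ψ') = cnv φ ψ + cnv φ ψ' := by
  ext x
  simp only [LinearMap.add_apply, cnv_apply _ _ x (ℛ k x), mul_add, Finset.sum_add_distrib]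

lemma cnv_smul_left (c : k) (φ ψ : H →ₗ[k] A') : cnv (c • φ) ψ = c • cnv φ ψ := by
  ext x
  simp only [LinearMap.smul_apply, cnv_apply _ _ x (ℛ k x), smul_mul_assoc, Finset.smul_sum]

lemma cnv_smul_right (c : k) (φ ψ : H →ₗ[k] A') : cnv φ (c • ψ) = c • cnv φ ψ := by
  ext x
  simp only [LinearMap.smul_apply, cnv_apply _ _ x (ℛ k x), mul_smul_comm, Finset.smul_sum]

lemma cnv_zero_left (ψ : H →ₗ[k] A') : cnv 0 ψ = 0 := by
  ext x
  simp [cnv_apply _ _ x (ℛ k x)]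

lemma cnv_zero_right (φ : H →ₗ[k] A') : cnv φ 0 = 0 := by
  ext x
  simp [cnv_apply _ _ x (ℛ k x)]

lemma cnv_inv_unique {φ ψ ψ' : H →ₗ[k] A'} (h1 : cnv φ ψ = cnvOne)
    (h2 : cnv ψ' φ = cnvOne) : ψ = ψ' := by
  have h := cnv_assoc ψ' φ ψ
  rw [h1, h2, cnv_cnvOne_left, cnv_cnvOne_right] at h
  exact h

lemma comp_cnv (θ : A' →ₗ[k] A'') (hθ : ∀ u v : A', θ (u * v) = θ u * θ v)
    (φ ψ : H →ₗ[k] A') : θ ∘ₗ cnv φ ψ = cnv (θ ∘ₗ φ) (θ ∘ₗ ψ) := by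
  ext x
  rw [LinearMap.comp_apply, cnv_apply φ ψ x (ℛ k x), cnv_apply _ _ x (ℛ k x), map_sum]
  simp [hθ]

lemma comp_cnvOne (θ : A' →ₗ[k] A'') (hθ1 : θ 1 = 1) :
    θ ∘ₗ (cnvOne : H →ₗ[k] A') = cnvOne := by
  ext x
  simp [cnvOne_apply, hθ1]

lemma cnv_mulRight (c : A') (φ ψ : H →ₗ[k] A') :
    LinearMap.mulRight k c ∘ₗ cnv φ ψ = cnv φ (LinearMap.mulRight k c ∘ₗ ψ) := by
  ext x
  rw [LinearMap.comp_apply, cnv_apply φ ψ x (ℛ k x), cnv_apply _ _ x (ℛ k x)]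
  simp [Finset.sum_mul, mul_assoc]

lemma cnv_mulLeft (c : A') (φ ψ : H →ₗ[k] A') :
    LinearMap.mulLeft k c ∘ₗ cnv φ ψ = cnv (LinearMap.mulLeft k c ∘ₗ φ) ψ := by
  ext x
  rw [LinearMap.comp_apply, cnv_apply φ ψ x (ℛ k x), cnv_apply _ _ x (ℛ k x)]
  simp [Finset.mul_sum, mul_assoc]

lemma cnv_middle (c : A') (φ ψ : H →ₗ[k] A') :
    cnv (LinearMap.mulRight k c ∘ₗ φ) ψ = cnv φ (LinearMap.mulLeft k c ∘ₗ ψ) := by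
  ext x
  rw [cnv_apply _ _ x (ℛ k x), cnv_apply _ _ x (ℛ k x)]
  simp [mul_assoc]


variable (k H) in
/-- Type synonym for the convolution algebra `Hom(H, H)`. -/
def CAlgH : Type _ := H →ₗ[k] H

instance : AddCommGroup (CAlgH k H) := inferInstanceAs (AddCommGroup (H →ₗ[k] H))
instance : Module k (CAlgH k H) := inferInstanceAs (Module k (H →ₗ[k] H))

noncomputable instance : Ring (CAlgH k H) where
  __ := (inferInstance : AddCommGroup (CAlgH k H))
  mul := cnv (A' := H)
  one := cnvOne (A' := H)
  mul_assoc := cnv_assoc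
  one_mul := cnv_cnvOne_left
  mul_one := cnv_cnvOne_right
  left_distrib := fun a b c => cnv_add_right a b c
  right_distrib := fun a b c => cnv_add_left a b c
  zero_mul := cnv_zero_left
  mul_zero := cnv_zero_right

noncomputable instance : Algebra k (CAlgH k H) :=
  Algebra.ofModule (fun c φ ψ => cnv_smul_left c φ ψ) (fun c φ ψ => cnv_smul_right c φ ψ)

/-- The identity, as a map from the convolution algebra to linear maps. -/
def CAlgH.outL : CAlgH k H →ₗ[k] (H →ₗ[k] H) := LinearMap.id

lemma CAlgH.outL_mul (c d : CAlgH k H) :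
    CAlgH.outL (c * d) = cnv (CAlgH.outL c) (CAlgH.outL d) := rfl

lemma CAlgH.outL_one : CAlgH.outL (1 : CAlgH k H) = cnvOne := rfl

lemma CAlgH.ext' {c d : CAlgH k H} (h : CAlgH.outL c = CAlgH.outL d) : c = d := h

/-- The product of two representations. -/
noncomputable def mulRepr {x y : H} {ι κ : Type*} (rx : Coalgebra.Repr k x ι)
    (ry : Coalgebra.Repr k y κ) :
    Coalgebra.Repr k (x * y) (ι × κ) where
  index := rx.index ×ˢ ry.index
  left := fun p => rx.left p.1 * ry.left p.2
  right := fun p => rx.right p.1 * ry.right p.2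
  eq := by
    rw [Bialgebra.comul_mul, ← rx.eq, ← ry.eq, Finset.sum_mul_sum, Finset.sum_product]
    simp [Algebra.TensorProduct.tmul_mul_tmul]

lemma mulRepr_index {x y : H} {ι κ : Type*} (rx : Coalgebra.Repr k x ι) (ry : Coalgebra.Repr k y κ) :
    (mulRepr rx ry).index = rx.index ×ˢ ry.index := rfl

lemma mulRepr_left {x y : H} {ι κ : Type*} (rx : Coalgebra.Repr k x ι) (ry : Coalgebra.Repr k y κ)
    (p : ι × κ) : (mulRepr rx ry).left p = rx.left p.1 * ry.left p.2 := rfl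

lemma mulRepr_right {x y : H} {ι κ : Type*} (rx : Coalgebra.Repr k x ι) (ry : Coalgebra.Repr k y κ)
    (p : ι × κ) : (mulRepr rx ry).right p = rx.right p.1 * ry.right p.2 := rfl

lemma antipode_one : 𝒮 (1 : H) = 1 := by
  have h := HopfAlgebra.mul_antipode_rTensor_comul_apply (R := k) (a := (1 : H))
  simpa [Algebra.TensorProduct.one_def] using h


open Coalgebra in
lemma antipode_mul (x y : H) : 𝒮 (x * y) = 𝒮 y * 𝒮 x := by
  let N : H →ₗ[k] CAlgH k H := LinearMap.llcomp k H H H 𝒮 ∘ₗ LinearMap.mul k H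
  let F : H →ₗ[k] CAlgH k H := LinearMap.mul k H
  let G : H →ₗ[k] CAlgH k H := LinearMap.lcomp k H 𝒮 ∘ₗ (LinearMap.mul k H).flip ∘ₗ 𝒮
  have hN : ∀ a b : H, CAlgH.outL (N a) b = 𝒮 (a * b) := fun a b => rfl
  have hF : ∀ a b : H, CAlgH.outL (F a) b = a * b := fun a b => rfl
  have hG : ∀ a b : H, CAlgH.outL (G a) b = 𝒮 b * 𝒮 a := fun a b => rfl
  have expand : ∀ (P Q : H →ₗ[k] CAlgH k H) (u v : H) (ru : Coalgebra.Repr k u (H × H))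
      (rv : Coalgebra.Repr k v (H × H)),
      CAlgH.outL (cnv P Q u) v = ∑ i ∈ ru.index, ∑ j ∈ rv.index,
        CAlgH.outL (P (ru.left i)) (rv.left j) * CAlgH.outL (Q (ru.right i)) (rv.right j) := by
    intro P Q u v ru rv
    rw [cnv_apply P Q u ru, map_sum, LinearMap.sum_apply]
    refine Finset.sum_congr rfl fun i _ => ?_
    rw [CAlgH.outL_mul, cnv_apply _ _ v rv]
  have cnvOne_eval : ∀ u v : H,
      CAlgH.outL ((cnvOne : H →ₗ[k] CAlgH k H) u) v = (εH u * εH v) • (1 : H) := by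
    intro u v
    rw [cnvOne_apply, map_smul, CAlgH.outL_one, LinearMap.smul_apply, cnvOne_apply, smul_smul]
  have key1 : cnv N F = (cnvOne : H →ₗ[k] CAlgH k H) := by
    refine LinearMap.ext fun u => CAlgH.ext' (LinearMap.ext fun v => ?_)
    rw [expand N F u v (ℛ k u) (ℛ k v), cnvOne_eval]
    simp only [hN, hF]
    have h := HopfAlgebra.sum_antipode_mul_eq_smul (R := k) (mulRepr (ℛ k u) (ℛ k v))
    simp only [mulRepr] at h
    rw [Finset.sum_product] at h
    rw [h, Bialgebra.counit_mul]
  have key2 : cnv F G = (cnvOne : H →ₗ[k] CAlgH k H) := by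
    refine LinearMap.ext fun u => CAlgH.ext' (LinearMap.ext fun v => ?_)
    rw [expand F G u v (ℛ k u) (ℛ k v), cnvOne_eval]
    simp only [hF, hG]
    have hv := HopfAlgebra.sum_mul_antipode_eq_smul (R := k) (ℛ k v)
    have hu := HopfAlgebra.sum_mul_antipode_eq_smul (R := k) (ℛ k u)
    calc ∑ i ∈ (ℛ k u).index, ∑ j ∈ (ℛ k v).index,
          (ℛ k u).left i * (ℛ k v).left j * (𝒮 ((ℛ k v).right j) * 𝒮 ((ℛ k u).right i))
        = ∑ i ∈ (ℛ k u).index, (ℛ k u).left i *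
            ((∑ j ∈ (ℛ k v).index, (ℛ k v).left j * 𝒮 ((ℛ k v).right j)) * 𝒮 ((ℛ k u).right i)) := by
          refine Finset.sum_congr rfl fun i _ => ?_
          rw [Finset.sum_mul, Finset.mul_sum]
          simp only [mul_assoc]
      _ = ∑ i ∈ (ℛ k u).index, (ℛ k u).left i * ((εH v • 1) * 𝒮 ((ℛ k u).right i)) := by rw [hv]
      _ = εH v • ∑ i ∈ (ℛ k u).index, (ℛ k u).left i * 𝒮 ((ℛ k u).right i) := by
          rw [Finset.smul_sum]
          exact Finset.sum_congr rfl fun i _ => by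
            rw [smul_mul_assoc, one_mul, mul_smul_comm]
      _ = (εH u * εH v) • (1 : H) := by rw [hu, smul_smul, mul_comm]
  have hGN : G = N := cnv_inv_unique key2 key1
  have := congrArg (fun c => CAlgH.outL c y) (congrArg (fun Φ => Φ x) hGN)
  simpa [hN x y, hG x y] using this.symm

end Aux

open Coalgebra

/-- For a total integral `f : H → A` which is an algebra map (with convolution
inverse `f ∘ 𝒮`), the formula `a · h = f⁻¹ h⑴ * a * f h⑵` defines a unital associative right
`H`-module structure on `A`, and the centralizer `A^B` of the coinvariants `B` is stable under
this action. -/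
theorem total_integral_algebra_map_gives_right_module
    (Sinv : H →ₗ[k] H) (hS₁ : Sinv ∘ₗ 𝒮 = LinearMap.id) (hS₂ : 𝒮 ∘ₗ Sinv = LinearMap.id)
    (ρA : A →ₗ[k] A ⊗[k] H)
    (hρ_coassoc : (TensorProduct.assoc k A H H).toLinearMap ∘ₗ rTensor H ρA ∘ₗ ρA =
      lTensor A Δ ∘ₗ ρA)
    (hρ_counit : (TensorProduct.rid k A).toLinearMap ∘ₗ lTensor A εH ∘ₗ ρA = LinearMap.id)
    (hρ_one : ρA 1 = (1 : A) ⊗ₜ[k] (1 : H))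
    (hρ_mul : ∀ x y : A, ρA (x * y) = ρA x * ρA y)
    (f : H →ₗ[k] A) (hf_one : f 1 = 1)
    (hf_comod : ρA ∘ₗ f = rTensor H f ∘ₗ Δ)
    (hf_mul : ∀ x y : H, f (x * y) = f x * f y)
 :
    (intAct Δ f (f ∘ₗ 𝒮) ∘ₗ lTensor A mulH =
      intAct Δ f (f ∘ₗ 𝒮) ∘ₗ rTensor H (intAct Δ f (f ∘ₗ 𝒮)) ∘ₗ (TensorProduct.assoc k A H H).symm.toLinearMap) ∧
    (∀ x : A, (intAct Δ f (f ∘ₗ 𝒮)) (x ⊗ₜ[k] (1 : H)) = x) ∧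
    (∀ a : A, (∀ b ∈ coinv ρA, a * b = b * a) →
      ∀ h : H, ∀ b ∈ coinv ρA,
        intAct Δ f (f ∘ₗ 𝒮) (a ⊗ₜ[k] h) * b = b * intAct Δ f (f ∘ₗ 𝒮) (a ⊗ₜ[k] h)) := by
  classical
  set g : H →ₗ[k] A := f ∘ₗ 𝒮 with hgdef
  have hg_apply : ∀ z : H, g z = f (𝒮 z) := fun z => rfl
  have hg_mul : ∀ z w : H, g (z * w) = g w * g z := by
    intro z w
    show f (𝒮 (z * w)) = f (𝒮 w) * f (𝒮 z)
    rw [antipode_mul, hf_mul]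
  have sandwich_tmul : ∀ (p q : H →ₗ[k] A) (a : A) (x y : H),
      sandwich p q (a ⊗ₜ[k] (x ⊗ₜ[k] y)) = p x * a * q y := by
    intro p q a x y
    simp [sandwich, LinearMap.mul'_apply]
  have act_tmul : ∀ (a : A) (h : H) {ι : Type _} (r : Coalgebra.Repr k h ι),
      intAct Δ f g (a ⊗ₜ[k] h) = ∑ i ∈ r.index, g (r.left i) * a * f (r.right i) := by
    intro a h ι r
    rw [intAct, LinearMap.comp_apply, lTensor_tmul, ← r.eq, TensorProduct.tmul_sum, map_sum]
    exact Finset.sum_congr rfl fun i _ => sandwich_tmul g f a _ _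
  have hfg : cnv f g = (cnvOne : H →ₗ[k] A) := by
    ext z
    rw [cnv_apply f g z (ℛ k z), cnvOne_apply]
    have h := HopfAlgebra.sum_mul_antipode_eq_smul (R := k) (ℛ k z)
    calc ∑ i ∈ (ℛ k z).index, f ((ℛ k z).left i) * g ((ℛ k z).right i)
        = f (∑ i ∈ (ℛ k z).index, (ℛ k z).left i * 𝒮 ((ℛ k z).right i)) := by
          rw [map_sum]
          exact Finset.sum_congr rfl fun i _ => (hf_mul _ _).symm
      _ = εH z • (1 : A) := by rw [h, map_smul, hf_one]
  have hgf : cnv g f = (cnvOne : H →ₗ[k] A) := by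
    ext z
    rw [cnv_apply g f z (ℛ k z), cnvOne_apply]
    have h := HopfAlgebra.sum_antipode_mul_eq_smul (R := k) (ℛ k z)
    calc ∑ i ∈ (ℛ k z).index, g ((ℛ k z).left i) * f ((ℛ k z).right i)
        = f (∑ i ∈ (ℛ k z).index, 𝒮 ((ℛ k z).left i) * (ℛ k z).right i) := by
          rw [map_sum]
          exact Finset.sum_congr rfl fun i _ => (hf_mul _ _).symm
      _ = εH z • (1 : A) := by rw [h, map_smul, hf_one]
  refine ⟨?_, ?_, ?_⟩
  · -- associativity
    ext a x y
    simp only [TensorProduct.AlgebraTensorModule.curry_apply, TensorProduct.curry_apply,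
      LinearMap.coe_restrictScalars, LinearMap.comp_apply, lTensor_tmul, LinearMap.mul'_apply,
      LinearEquiv.coe_coe, TensorProduct.assoc_symm_tmul, rTensor_tmul]
    rw [act_tmul a _ (mulRepr (ℛ k x) (ℛ k y)), act_tmul (intAct Δ f g (a ⊗ₜ[k] x)) y (ℛ k y),
      act_tmul a x (ℛ k x)]
    simp only [mulRepr]
    rw [Finset.sum_product, Finset.sum_comm]
    refine Finset.sum_congr rfl fun j _ => ?_
    rw [Finset.mul_sum, Finset.sum_mul]
    refine Finset.sum_congr rfl fun i _ => ?_
    rw [hg_mul, hf_mul]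
    simp only [mul_assoc]
  · -- unit
    intro x
    have h1 : Δ (1 : H) = (1 : H) ⊗ₜ[k] (1 : H) := by
      rw [Bialgebra.comul_one]
      exact Algebra.TensorProduct.one_def
    rw [intAct, LinearMap.comp_apply, lTensor_tmul, h1, sandwich_tmul]
    rw [hg_apply, antipode_one, hf_one]
    simp
  · -- centralizer stability
    intro a ha h b hb
    have hbmem : ρA b = b ⊗ₜ[k] (1 : H) := hb
    set ι : A →ₗ[k] A ⊗[k] H := (TensorProduct.mk k A H).flip 1 with hιdef
    have hι_apply : ∀ c : A, ι c = c ⊗ₜ[k] (1 : H) := fun c => rfl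
    have hι_mul : ∀ c d : A, ι (c * d) = ι c * ι d := by
      intro c d
      simp [hι_apply, Algebra.TensorProduct.tmul_mul_tmul]
    have hι_one : ι 1 = 1 := by
      rw [hι_apply]
      exact Algebra.TensorProduct.one_def.symm
    set W : H →ₗ[k] A ⊗[k] H := TensorProduct.mk k A H 1 with hWdef
    have hW_apply : ∀ z : H, W z = (1 : A) ⊗ₜ[k] z := fun z => rfl
    set u : H →ₗ[k] A := LinearMap.mulRight k b ∘ₗ f with hudef
    set T : H →ₗ[k] A := cnv u g with hTdef
    set v : H →ₗ[k] A := LinearMap.mulRight k a ∘ₗ g with hvdef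
    have hρ_cnv : ∀ (φ ψ : H →ₗ[k] A), ρA ∘ₗ cnv φ ψ = cnv (ρA ∘ₗ φ) (ρA ∘ₗ ψ) :=
      fun φ ψ => comp_cnv ρA hρ_mul φ ψ
    have hι_cnv : ∀ (φ ψ : H →ₗ[k] A), ι ∘ₗ cnv φ ψ = cnv (ι ∘ₗ φ) (ι ∘ₗ ψ) :=
      fun φ ψ => comp_cnv ι hι_mul φ ψ
    have hρ_cone : ρA ∘ₗ (cnvOne : H →ₗ[k] A) = cnvOne :=
      comp_cnvOne ρA (by rw [hρ_one]; exact Algebra.TensorProduct.one_def.symm)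
    have hι_cone : ι ∘ₗ (cnvOne : H →ₗ[k] A) = cnvOne := comp_cnvOne ι hι_one
    have hρf : ρA ∘ₗ f = cnv (ι ∘ₗ f) W := by
      ext z
      rw [LinearMap.comp_apply, cnv_apply _ _ z (ℛ k z)]
      have hcz : ρA (f z) = rTensor H f (Δ z) := LinearMap.congr_fun hf_comod z
      rw [hcz, ← (ℛ k z).eq, map_sum]
      exact Finset.sum_congr rfl fun i _ => by
        simp [hι_apply, hW_apply, Algebra.TensorProduct.tmul_mul_tmul]
    have hρu : ρA ∘ₗ u = cnv (ι ∘ₗ u) W := by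
      ext z
      rw [LinearMap.comp_apply, cnv_apply _ _ z (ℛ k z)]
      have hcz : ρA (f z) = rTensor H f (Δ z) := LinearMap.congr_fun hf_comod z
      show ρA (f z * b) = _
      rw [hρ_mul, hcz, hbmem, ← (ℛ k z).eq, map_sum, Finset.sum_mul]
      refine Finset.sum_congr rfl fun i _ => ?_
      show (f ((ℛ k z).left i) ⊗ₜ[k] (ℛ k z).right i) * (b ⊗ₜ[k] (1 : H))
          = ι (u ((ℛ k z).left i)) * W ((ℛ k z).right i)
      have : u ((ℛ k z).left i) = f ((ℛ k z).left i) * b := rfl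
      rw [this, hι_apply, hW_apply]
      simp [Algebra.TensorProduct.tmul_mul_tmul]
    have hWW' : cnv W (W ∘ₗ 𝒮) = (cnvOne : H →ₗ[k] A ⊗[k] H) := by
      ext z
      rw [cnv_apply _ _ z (ℛ k z), cnvOne_apply]
      have hz := HopfAlgebra.sum_mul_antipode_eq_smul (R := k) (ℛ k z)
      calc ∑ i ∈ (ℛ k z).index, W ((ℛ k z).left i) * (W ∘ₗ 𝒮) ((ℛ k z).right i)
          = (1 : A) ⊗ₜ[k] (∑ i ∈ (ℛ k z).index, (ℛ k z).left i * 𝒮 ((ℛ k z).right i)) := by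
            rw [TensorProduct.tmul_sum]
            exact Finset.sum_congr rfl fun i _ => by
              simp [hW_apply, Algebra.TensorProduct.tmul_mul_tmul]
        _ = εH z • (1 : A ⊗[k] H) := by
            rw [hz, TensorProduct.tmul_smul, Algebra.TensorProduct.one_def]
    have hW'W : cnv (W ∘ₗ 𝒮) W = (cnvOne : H →ₗ[k] A ⊗[k] H) := by
      ext z
      rw [cnv_apply _ _ z (ℛ k z), cnvOne_apply]
      have hz := HopfAlgebra.sum_antipode_mul_eq_smul (R := k) (ℛ k z)
      calc ∑ i ∈ (ℛ k z).index, (W ∘ₗ 𝒮) ((ℛ k z).left i) * W ((ℛ k z).right i)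
          = (1 : A) ⊗ₜ[k] (∑ i ∈ (ℛ k z).index, 𝒮 ((ℛ k z).left i) * (ℛ k z).right i) := by
            rw [TensorProduct.tmul_sum]
            exact Finset.sum_congr rfl fun i _ => by
              simp [hW_apply, Algebra.TensorProduct.tmul_mul_tmul]
        _ = εH z • (1 : A ⊗[k] H) := by
            rw [hz, TensorProduct.tmul_smul, Algebra.TensorProduct.one_def]
    have e1 : cnv (ρA ∘ₗ f) (ρA ∘ₗ g) = (cnvOne : H →ₗ[k] A ⊗[k] H) := by
      rw [← hρ_cnv, hfg, hρ_cone]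
    have e2 : cnv (cnv (W ∘ₗ 𝒮) (ι ∘ₗ g)) (ρA ∘ₗ f) = (cnvOne : H →ₗ[k] A ⊗[k] H) := by
      rw [hρf, cnv_assoc, ← cnv_assoc (ι ∘ₗ g) (ι ∘ₗ f) W, ← hι_cnv, hgf, hι_cone,
        cnv_cnvOne_left, hW'W]
    have hρg : ρA ∘ₗ g = cnv (W ∘ₗ 𝒮) (ι ∘ₗ g) := cnv_inv_unique e1 e2
    have hρT : ρA ∘ₗ T = ι ∘ₗ T := by
      rw [hTdef, hρ_cnv, hρu, hρg, hι_cnv]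
      rw [cnv_assoc, ← cnv_assoc W (W ∘ₗ 𝒮) (ι ∘ₗ g), hWW', cnv_cnvOne_left]
    have hρT' : ∀ z : H, ρA (T z) = T z ⊗ₜ[k] (1 : H) := by
      intro z
      have hz := LinearMap.congr_fun hρT z
      rw [LinearMap.comp_apply, LinearMap.comp_apply, hι_apply] at hz
      exact hz
    have hTBmap : LinearMap.mulLeft k a ∘ₗ T = LinearMap.mulRight k a ∘ₗ T := by
      refine LinearMap.ext fun z => ?_
      have hmem : T z ∈ coinv ρA := by
        simp only [coinv, Set.mem_setOf_eq]
        exact hρT' z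
      simpa using ha (T z) hmem
    have hu_eq : cnv T f = u := by
      rw [hTdef, cnv_assoc, hgf, cnv_cnvOne_right]
    have hgu : cnv g u = LinearMap.mulRight k b ∘ₗ (cnvOne : H →ₗ[k] A) := by
      rw [hudef, ← cnv_mulRight, hgf]
    have hbc : LinearMap.mulRight k b ∘ₗ (cnvOne : H →ₗ[k] A)
        = LinearMap.mulLeft k b ∘ₗ (cnvOne : H →ₗ[k] A) := by
      ext z
      simp [cnvOne_apply, smul_mul_assoc, mul_smul_comm]
    have hvT : cnv v T = LinearMap.mulLeft k b ∘ₗ v := by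
      calc cnv v T = cnv g (LinearMap.mulLeft k a ∘ₗ T) := cnv_middle a g T
        _ = cnv g (LinearMap.mulRight k a ∘ₗ T) := by rw [hTBmap]
        _ = cnv g (cnv u v) := by rw [hTdef, cnv_mulRight]
        _ = cnv (cnv g u) v := (cnv_assoc g u v).symm
        _ = cnv (LinearMap.mulLeft k b ∘ₗ (cnvOne : H →ₗ[k] A)) v := by rw [hgu, hbc]
        _ = LinearMap.mulLeft k b ∘ₗ cnv cnvOne v := (cnv_mulLeft b cnvOne v).symm
        _ = LinearMap.mulLeft k b ∘ₗ v := by rw [cnv_cnvOne_left]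
    have main : LinearMap.mulRight k b ∘ₗ cnv v f = LinearMap.mulLeft k b ∘ₗ cnv v f := by
      calc LinearMap.mulRight k b ∘ₗ cnv v f
          = cnv v (LinearMap.mulRight k b ∘ₗ f) := cnv_mulRight b v f
        _ = cnv v u := by rw [← hudef]
        _ = cnv v (cnv T f) := by rw [hu_eq]
        _ = cnv (cnv v T) f := (cnv_assoc v T f).symm
        _ = cnv (LinearMap.mulLeft k b ∘ₗ v) f := by rw [hvT]
        _ = LinearMap.mulLeft k b ∘ₗ cnv v f := (cnv_mulLeft b v f).symm
    have hact : cnv v f h = intAct Δ f g (a ⊗ₜ[k] h) := by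
      rw [cnv_apply v f h (ℛ k h), act_tmul a h (ℛ k h)]
      exact Finset.sum_congr rfl fun i _ => rfl
    have hmain := LinearMap.congr_fun main h
    simp only [LinearMap.comp_apply, LinearMap.mulRight_apply, LinearMap.mulLeft_apply] at hmain
    rw [← hact]
    exact hmain
end
end

section
/- Let C(D)_H be a cleft Hopf Galois coextension with convolution invertible total cointegral f: C → H. Then can^{-1}(c⊗c') = c(1) ⊗ f^{-1}(c(2)) f(c') for all c⊗c' ∈ C□_D C; in particular κ(c⊗c') := (ε⊗id)(can^{-1}(c⊗c')) = f^{-1}(c) f(c'). -/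
open TensorProduct LinearMap

noncomputable section

variable {k H C M : Type*} [Field k] [Ring H] [HopfAlgebra k H]
  [AddCommGroup C] [Module k C] [Coalgebra k C] [AddCommGroup M] [Module k M]

local notation "Δ" => (Coalgebra.comul (R := k) (A := H))
local notation "εH" => (Coalgebra.counit (R := k) (A := H))
local notation "𝒮" => (HopfAlgebra.antipode (R := k) (A := H))
local notation "mulH" => (LinearMap.mul' k H)
local notation "ΔC" => (Coalgebra.comul (R := k) (A := C))
local notation "εC" => (Coalgebra.counit (R := k) (A := C))

/-- The right `H`-coaction `c ↦ c⑵ ⊗ g c⑴ * f c⑶` attached to a total cointegral `f` with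
convolution inverse `g`. -/
def coactInt (f g : C →ₗ[k] H) : C →ₗ[k] C ⊗[k] H :=
  lTensor C (mulH ∘ₗ TensorProduct.map g f) ∘ₗ
    lTensor C (TensorProduct.comm k C C).toLinearMap ∘ₗ
    (TensorProduct.assoc k C C C).toLinearMap ∘ₗ
    (TensorProduct.comm k C (C ⊗[k] C)).toLinearMap ∘ₗ lTensor C ΔC ∘ₗ ΔC

/-- The left `H`-coaction `c ↦ g c⑶ * f c⑴ ⊗ c⑵`. -/
def lcoactA (f g : C →ₗ[k] H) : C →ₗ[k] H ⊗[k] C :=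
  rTensor C (mulH ∘ₗ TensorProduct.map g f) ∘ₗ
    rTensor C (TensorProduct.comm k C C).toLinearMap ∘ₗ
    (TensorProduct.assoc k C C C).symm.toLinearMap ∘ₗ
    lTensor C (TensorProduct.comm k C C).toLinearMap ∘ₗ lTensor C ΔC ∘ₗ ΔC

/-- The left `H`-coaction `c ↦ g c⑴ * f c⑶ ⊗ c⑵`. -/
def lcoactB (f g : C →ₗ[k] H) : C →ₗ[k] H ⊗[k] C :=
  rTensor C (mulH ∘ₗ TensorProduct.map g f) ∘ₗ
    (TensorProduct.assoc k C C C).symm.toLinearMap ∘ₗ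
    lTensor C (TensorProduct.comm k C C).toLinearMap ∘ₗ lTensor C ΔC ∘ₗ ΔC

/-- The coideal `I = span {c·h - ε(h) c}`, so that `D = C ⧸ modIdeal γ`. -/
def modIdeal (γ : C ⊗[k] H →ₗ[k] C) : Submodule k C :=
  Submodule.span k {x : C | ∃ c h, x = γ (c ⊗ₜ[k] h) - εH h • c}

/-- The subspace `C^D = {c | c⑴ φ(π c⑵) = c⑵ φ(π c⑴) for all φ ∈ D*}`. -/
def cdSub (γ : C ⊗[k] H →ₗ[k] C) : Submodule k C :=
  ⨅ φ : (C ⧸ modIdeal γ) →ₗ[k] k,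
    LinearMap.ker
      ((TensorProduct.rid k C).toLinearMap ∘ₗ lTensor C (φ ∘ₗ (modIdeal γ).mkQ) ∘ₗ ΔC -
        (TensorProduct.lid k C).toLinearMap ∘ₗ rTensor C (φ ∘ₗ (modIdeal γ).mkQ) ∘ₗ ΔC)

/-- The canonical map `C ⊗ H → C ⊗ C`, `c ⊗ h ↦ c⑴ ⊗ c⑵ · h`, of a Hopf Galois coextension. -/
def canMapC (γ : C ⊗[k] H →ₗ[k] C) : C ⊗[k] H →ₗ[k] C ⊗[k] C :=
  lTensor C γ ∘ₗ (TensorProduct.assoc k C C H).toLinearMap ∘ₗ rTensor H ΔC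

/-- The cotensor product `C □_D C` as a subspace of `C ⊗ C`. -/
def cotensorC (γ : C ⊗[k] H →ₗ[k] C) : Submodule k (C ⊗[k] C) :=
  LinearMap.ker
    ((TensorProduct.assoc k C (C ⧸ modIdeal γ) C).toLinearMap ∘ₗ
        rTensor C (lTensor C (modIdeal γ).mkQ ∘ₗ ΔC) -
      lTensor C (rTensor C (modIdeal γ).mkQ ∘ₗ ΔC))

/-- `c ⊗ c' ↦ c⑴ ⊗ fInv c⑵ * f c'`, the candidate for `can⁻¹`. -/
def psiMap (f fInv : C →ₗ[k] H) : C ⊗[k] C →ₗ[k] C ⊗[k] H :=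
  lTensor C (mulH ∘ₗ TensorProduct.map fInv f) ∘ₗ
    (TensorProduct.assoc k C C C).toLinearMap ∘ₗ rTensor C ΔC

/-- `κ = (ε ⊗ id) ∘ can⁻¹`, built from a chosen section `inv` of the canonical map. -/
def kappaOf (inv : C ⊗[k] C →ₗ[k] C ⊗[k] H) : C ⊗[k] C →ₗ[k] H :=
  (TensorProduct.lid k H).toLinearMap ∘ₗ rTensor H εC ∘ₗ inv

/-- The coaction `c ↦ c⑵ ⊗ κ (c⑴ ⊗ c⑶)`. -/
def coactKappa (inv : C ⊗[k] C →ₗ[k] C ⊗[k] H) : C →ₗ[k] C ⊗[k] H :=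
  lTensor C (kappaOf inv) ∘ₗ (TensorProduct.assoc k C C C).toLinearMap ∘ₗ
    rTensor C (TensorProduct.comm k C C).toLinearMap ∘ₗ
    (TensorProduct.assoc k C C C).symm.toLinearMap ∘ₗ lTensor C ΔC ∘ₗ ΔC

set_option linter.unusedSectionVars false
set_option maxHeartbeats 1000000

section AuxProof
open Coalgebra

variable (γ : C ⊗[k] H →ₗ[k] C) (f fInv : C →ₗ[k] H)

lemma aux_hA (hγ_assoc : γ ∘ₗ lTensor C mulH =
      γ ∘ₗ rTensor H γ ∘ₗ (TensorProduct.assoc k C H H).symm.toLinearMap)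
    (c : C) (x y : H) : γ (c ⊗ₜ[k] (x * y)) = γ (γ (c ⊗ₜ[k] x) ⊗ₜ[k] y) := by
  simpa using LinearMap.congr_fun hγ_assoc (c ⊗ₜ[k] (x ⊗ₜ[k] y))

lemma aux_fmod (hf_mod : f ∘ₗ γ = mulH ∘ₗ rTensor H f) (c : C) (h : H) :
    f (γ (c ⊗ₜ[k] h)) = f c * h := by
  simpa using LinearMap.congr_fun hf_mod (c ⊗ₜ[k] h)

lemma aux_counit_gamma (hγ_counit : εC ∘ₗ γ = LinearMap.mul' k k ∘ₗ TensorProduct.map εC εH)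
    (c : C) (h : H) : εC (γ (c ⊗ₜ[k] h)) = εC c * εH h := by
  simpa using LinearMap.congr_fun hγ_counit (c ⊗ₜ[k] h)

lemma aux_conv₁ (hconv₁ : mulH ∘ₗ TensorProduct.map fInv f ∘ₗ ΔC = Algebra.linearMap k H ∘ₗ εC)
    (a : C) {ι : Type*} (r : Coalgebra.Repr k a ι) :
    ∑ i ∈ r.index, fInv (r.left i) * f (r.right i) = εC a • (1 : H) := by
  have := LinearMap.congr_fun hconv₁ a
  simp only [LinearMap.comp_apply] at this
  rw [← r.eq] at this
  simpa [map_sum, Algebra.smul_def] using this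

lemma aux_conv₂ (hconv₂ : mulH ∘ₗ TensorProduct.map f fInv ∘ₗ ΔC = Algebra.linearMap k H ∘ₗ εC)
    (a : C) {ι : Type*} (r : Coalgebra.Repr k a ι) :
    ∑ i ∈ r.index, f (r.left i) * fInv (r.right i) = εC a • (1 : H) := by
  have := LinearMap.congr_fun hconv₂ a
  simp only [LinearMap.comp_apply] at this
  rw [← r.eq] at this
  simpa [map_sum, Algebra.smul_def] using this

lemma aux_comul_gamma (hγ_comul : ΔC ∘ₗ γ = TensorProduct.map γ γ ∘ₗ
      (tensorTensorTensorComm k C C H H).toLinearMap ∘ₗ TensorProduct.map ΔC Δ)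
    (c : C) (h : H) {ι₁ ι₂ : Type*} (rc : Coalgebra.Repr k c ι₁) (rh : Coalgebra.Repr k h ι₂) :
    ΔC (γ (c ⊗ₜ[k] h)) = ∑ i ∈ rc.index, ∑ j ∈ rh.index,
      γ (rc.left i ⊗ₜ[k] rh.left j) ⊗ₜ[k] γ (rc.right i ⊗ₜ[k] rh.right j) := by
  have := LinearMap.congr_fun hγ_comul (c ⊗ₜ[k] h)
  simp only [LinearMap.comp_apply, TensorProduct.map_tmul] at this
  rw [← rc.eq, ← rh.eq] at this
  rw [this]
  simp only [TensorProduct.sum_tmul, TensorProduct.tmul_sum, map_sum,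
    tensorTensorTensorComm_tmul, TensorProduct.map_tmul, LinearEquiv.coe_coe]
  rw [Finset.sum_comm]

lemma aux_sum_smul_counit {A : Type*} [AddCommGroup A] [Module k A] [Coalgebra k A]
    (a : A) {ι : Type*} (r : Coalgebra.Repr k a ι) :
    ∑ i ∈ r.index, Coalgebra.counit (R := k) (r.right i) • r.left i = a := by
  have := Coalgebra.sum_tmul_counit_eq (R := k) r
  apply_fun (TensorProduct.rid k A) at this
  simp only [map_sum, TensorProduct.rid_tmul, TensorProduct.rid_tmul, one_smul] at this
  exact this

lemma aux_sum_counit_smul {A : Type*} [AddCommGroup A] [Module k A] [Coalgebra k A]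
    (a : A) {ι : Type*} (r : Coalgebra.Repr k a ι) :
    ∑ i ∈ r.index, Coalgebra.counit (R := k) (r.left i) • r.right i = a := by
  have := Coalgebra.sum_counit_tmul_eq (R := k) r
  apply_fun (TensorProduct.lid k A) at this
  simp only [map_sum, TensorProduct.lid_tmul, one_smul] at this
  exact this

end AuxProof
section AuxProof2
open Coalgebra

variable (γ : C ⊗[k] H →ₗ[k] C) (f fInv : C →ₗ[k] H)

lemma aux_sum4 {N : Type*} [AddCommMonoid N] {I J : Type*} {P : I → Type*} {Q : J → Type*}
    (A : Finset I) (B : (i : I) → Finset (P i)) (Cs : Finset J) (D : (j : J) → Finset (Q j))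
    (g : (i : I) → P i → (j : J) → Q j → N) :
    ∑ i ∈ A, ∑ p ∈ B i, ∑ j ∈ Cs, ∑ q ∈ D j, g i p j q
      = ∑ j ∈ Cs, ∑ q ∈ D j, ∑ i ∈ A, ∑ p ∈ B i, g i p j q := by
  calc ∑ i ∈ A, ∑ p ∈ B i, ∑ j ∈ Cs, ∑ q ∈ D j, g i p j q
      = ∑ i ∈ A, ∑ j ∈ Cs, ∑ p ∈ B i, ∑ q ∈ D j, g i p j q :=
        Finset.sum_congr rfl fun i _ => by rw [Finset.sum_comm]
    _ = ∑ j ∈ Cs, ∑ i ∈ A, ∑ p ∈ B i, ∑ q ∈ D j, g i p j q := by rw [Finset.sum_comm]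
    _ = ∑ j ∈ Cs, ∑ i ∈ A, ∑ q ∈ D j, ∑ p ∈ B i, g i p j q :=
        Finset.sum_congr rfl fun j _ => Finset.sum_congr rfl fun i _ => by rw [Finset.sum_comm]
    _ = ∑ j ∈ Cs, ∑ q ∈ D j, ∑ i ∈ A, ∑ p ∈ B i, g i p j q :=
        Finset.sum_congr rfl fun j _ => by rw [Finset.sum_comm]

lemma aux_F2 (hf_mod : f ∘ₗ γ = mulH ∘ₗ rTensor H f)
    (hconv₂ : mulH ∘ₗ TensorProduct.map f fInv ∘ₗ ΔC = Algebra.linearMap k H ∘ₗ εC)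
    (c' : C) (h' : H) {ι₁ ι₂ : Type*} (rc : Coalgebra.Repr k c' ι₁) (rh : Coalgebra.Repr k h' ι₂) :
    ∑ p ∈ rc.index, ∑ q ∈ rh.index,
      f (γ (rc.left p ⊗ₜ[k] rh.left q)) * (𝒮 (rh.right q) * fInv (rc.right p))
      = (εC c' * εH h') • (1 : H) := by
  have step : ∀ p ∈ rc.index, ∑ q ∈ rh.index,
      f (γ (rc.left p ⊗ₜ[k] rh.left q)) * (𝒮 (rh.right q) * fInv (rc.right p))
      = εH h' • (f (rc.left p) * fInv (rc.right p)) := by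
    intro p _
    calc ∑ q ∈ rh.index, f (γ (rc.left p ⊗ₜ[k] rh.left q)) * (𝒮 (rh.right q) * fInv (rc.right p))
        = ∑ q ∈ rh.index,
            f (rc.left p) * ((rh.left q * 𝒮 (rh.right q)) * fInv (rc.right p)) := by
          refine Finset.sum_congr rfl fun q _ => ?_
          rw [aux_fmod γ f hf_mod, mul_assoc, ← mul_assoc (rh.left q)]
      _ = f (rc.left p) * ((∑ q ∈ rh.index, rh.left q * 𝒮 (rh.right q)) * fInv (rc.right p)) := by
          rw [Finset.sum_mul, Finset.mul_sum]
      _ = εH h' • (f (rc.left p) * fInv (rc.right p)) := by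
          rw [HopfAlgebra.sum_mul_antipode_eq_smul rh, smul_mul_assoc, one_mul, mul_smul_comm]
  rw [Finset.sum_congr rfl step, ← Finset.smul_sum, aux_conv₂ f fInv hconv₂ c' rc,
    smul_smul, mul_comm]

lemma aux_F1 (hγ_comul : ΔC ∘ₗ γ = TensorProduct.map γ γ ∘ₗ
      (tensorTensorTensorComm k C C H H).toLinearMap ∘ₗ TensorProduct.map ΔC Δ)
    (hγ_counit : εC ∘ₗ γ = LinearMap.mul' k k ∘ₗ TensorProduct.map εC εH)
    (hconv₁ : mulH ∘ₗ TensorProduct.map fInv f ∘ₗ ΔC = Algebra.linearMap k H ∘ₗ εC)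
    (c' : C) (h' : H) {ι₁ ι₂ : Type*} (rc : Coalgebra.Repr k c' ι₁) (rh : Coalgebra.Repr k h' ι₂) :
    ∑ p ∈ rc.index, ∑ q ∈ rh.index,
      fInv (γ (rc.left p ⊗ₜ[k] rh.left q)) * f (γ (rc.right p ⊗ₜ[k] rh.right q))
      = (εC c' * εH h') • (1 : H) := by
  have e := LinearMap.congr_fun hconv₁ (γ (c' ⊗ₜ[k] h'))
  simp only [LinearMap.comp_apply] at e
  rw [aux_comul_gamma γ hγ_comul c' h' rc rh] at e
  simp only [map_sum, TensorProduct.map_tmul, LinearMap.mul'_apply] at e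
  rw [e, aux_counit_gamma γ hγ_counit, Algebra.linearMap_apply, Algebra.smul_def, mul_one]

end AuxProof2
section AuxProof3
open Coalgebra

variable (γ : C ⊗[k] H →ₗ[k] C) (f fInv : C →ₗ[k] H)

lemma auxA
    (hγ_comul : ΔC ∘ₗ γ = TensorProduct.map γ γ ∘ₗ
      (tensorTensorTensorComm k C C H H).toLinearMap ∘ₗ TensorProduct.map ΔC Δ)
    (hγ_counit : εC ∘ₗ γ = LinearMap.mul' k k ∘ₗ TensorProduct.map εC εH)
    (hf_mod : f ∘ₗ γ = mulH ∘ₗ rTensor H f)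
    (hconv₁ : mulH ∘ₗ TensorProduct.map fInv f ∘ₗ ΔC = Algebra.linearMap k H ∘ₗ εC)
    (hconv₂ : mulH ∘ₗ TensorProduct.map f fInv ∘ₗ ΔC = Algebra.linearMap k H ∘ₗ εC)
    (c : C) (h : H) :
    fInv (γ (c ⊗ₜ[k] h)) = 𝒮 h * fInv c := by
  classical
  set r : Coalgebra.Repr k c _ := ℛ k c with hrdef
  set s : Coalgebra.Repr k h _ := ℛ k h with hsdef
  set rl : (i : r.ι) → Coalgebra.Repr k (r.left i) _ := fun i => ℛ k (r.left i) with hrl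
  set rr : (i : r.ι) → Coalgebra.Repr k (r.right i) _ := fun i => ℛ k (r.right i) with hrr
  set sl : (j : s.ι) → Coalgebra.Repr k (s.left j) _ := fun j => ℛ k (s.left j) with hsl
  set sr : (j : s.ι) → Coalgebra.Repr k (s.right j) _ := fun j => ℛ k (s.right j) with hsr
  set L₁ : C ⊗[k] (C ⊗[k] C) →ₗ[k] H :=
    ∑ j ∈ s.index, ∑ q ∈ (sr j).index,
      mulH ∘ₗ TensorProduct.map (fInv ∘ₗ γ ∘ₗ (TensorProduct.mk k C H).flip (s.left j))
        (mulH ∘ₗ TensorProduct.map (f ∘ₗ γ ∘ₗ (TensorProduct.mk k C H).flip ((sr j).left q))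
          (LinearMap.mulLeft k (𝒮 ((sr j).right q)) ∘ₗ fInv)) with hL₁
  have hL₁app : ∀ c₁ c₂ c₃ : C, L₁ (c₁ ⊗ₜ[k] (c₂ ⊗ₜ[k] c₃)) =
      ∑ j ∈ s.index, ∑ q ∈ (sr j).index,
        fInv (γ (c₁ ⊗ₜ[k] s.left j)) *
          (f (γ (c₂ ⊗ₜ[k] (sr j).left q)) * (𝒮 ((sr j).right q) * fInv c₃)) := by
    intro c₁ c₂ c₃
    simp [hL₁, LinearMap.sum_apply, TensorProduct.map_tmul, LinearMap.mul'_apply,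
      LinearMap.mulLeft_apply, TensorProduct.mk_apply, LinearMap.flip_apply]
  set L₂ : H ⊗[k] (H ⊗[k] H) →ₗ[k] H :=
    ∑ i ∈ r.index, ∑ p ∈ (rl i).index,
      mulH ∘ₗ TensorProduct.map (fInv ∘ₗ γ ∘ₗ TensorProduct.mk k C H ((rl i).left p))
        (mulH ∘ₗ TensorProduct.map (f ∘ₗ γ ∘ₗ TensorProduct.mk k C H ((rl i).right p))
          (LinearMap.mulRight k (fInv (r.right i)) ∘ₗ 𝒮)) with hL₂
  have hL₂app : ∀ h₁ h₂ h₃ : H, L₂ (h₁ ⊗ₜ[k] (h₂ ⊗ₜ[k] h₃)) =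
      ∑ i ∈ r.index, ∑ p ∈ (rl i).index,
        fInv (γ ((rl i).left p ⊗ₜ[k] h₁)) *
          (f (γ ((rl i).right p ⊗ₜ[k] h₂)) * (𝒮 h₃ * fInv (r.right i))) := by
    intro h₁ h₂ h₃
    simp [hL₂, LinearMap.sum_apply, TensorProduct.map_tmul, LinearMap.mul'_apply,
      LinearMap.mulRight_apply, TensorProduct.mk_apply]
  calc fInv (γ (c ⊗ₜ[k] h))
      = ∑ i ∈ r.index, ∑ j ∈ s.index,
          (εC (r.right i) * εH (s.right j)) • fInv (γ (r.left i ⊗ₜ[k] s.left j)) := by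
        conv_lhs => rw [← aux_sum_smul_counit c r, ← aux_sum_smul_counit h s]
        simp only [TensorProduct.sum_tmul, TensorProduct.tmul_sum, map_sum,
          ← TensorProduct.smul_tmul', TensorProduct.tmul_smul, map_smul,
          Finset.smul_sum, smul_smul]
        rw [Finset.sum_comm]
        exact Finset.sum_congr rfl fun i _ => Finset.sum_congr rfl fun j _ => by
          rw [mul_comm]
    _ = ∑ i ∈ r.index, ∑ j ∈ s.index, ∑ p ∈ (rr i).index, ∑ q ∈ (sr j).index,
          fInv (γ (r.left i ⊗ₜ[k] s.left j)) *
            (f (γ ((rr i).left p ⊗ₜ[k] (sr j).left q)) *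
              (𝒮 ((sr j).right q) * fInv ((rr i).right p))) := by
        refine Finset.sum_congr rfl fun i _ => Finset.sum_congr rfl fun j _ => ?_
        rw [show (∑ p ∈ (rr i).index, ∑ q ∈ (sr j).index,
              fInv (γ (r.left i ⊗ₜ[k] s.left j)) *
                (f (γ ((rr i).left p ⊗ₜ[k] (sr j).left q)) *
                  (𝒮 ((sr j).right q) * fInv ((rr i).right p))))
            = fInv (γ (r.left i ⊗ₜ[k] s.left j)) *
              ∑ p ∈ (rr i).index, ∑ q ∈ (sr j).index,
                f (γ ((rr i).left p ⊗ₜ[k] (sr j).left q)) *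
                  (𝒮 ((sr j).right q) * fInv ((rr i).right p)) by
            simp [Finset.mul_sum]]
        rw [aux_F2 γ f fInv hf_mod hconv₂ (r.right i) (s.right j) (rr i) (sr j),
          mul_smul_comm, mul_one]
    _ = ∑ i ∈ r.index, ∑ p ∈ (rr i).index,
          L₁ (r.left i ⊗ₜ[k] ((rr i).left p ⊗ₜ[k] (rr i).right p)) := by
        refine Finset.sum_congr rfl fun i _ => ?_
        rw [Finset.sum_comm]
        exact Finset.sum_congr rfl fun p _ => (hL₁app _ _ _).symm
    _ = ∑ i ∈ r.index, ∑ p ∈ (rl i).index,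
          L₁ ((rl i).left p ⊗ₜ[k] ((rl i).right p ⊗ₜ[k] r.right i)) := by
        have key := Coalgebra.sum_tmul_tmul_eq (R := k) r rl rr
        have := congrArg L₁ key
        simpa only [map_sum] using this.symm
    _ = ∑ i ∈ r.index, ∑ p ∈ (rl i).index, ∑ j ∈ s.index, ∑ q ∈ (sr j).index,
          fInv (γ ((rl i).left p ⊗ₜ[k] s.left j)) *
            (f (γ ((rl i).right p ⊗ₜ[k] (sr j).left q)) *
              (𝒮 ((sr j).right q) * fInv (r.right i))) := by
        exact Finset.sum_congr rfl fun i _ => Finset.sum_congr rfl fun p _ => hL₁app _ _ _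
    _ = ∑ j ∈ s.index, ∑ q ∈ (sr j).index,
          L₂ (s.left j ⊗ₜ[k] ((sr j).left q ⊗ₜ[k] (sr j).right q)) := by
        rw [aux_sum4 r.index (fun i => (rl i).index) s.index (fun j => (sr j).index)
          (fun i p j q => fInv (γ ((rl i).left p ⊗ₜ[k] s.left j)) *
            (f (γ ((rl i).right p ⊗ₜ[k] (sr j).left q)) *
              (𝒮 ((sr j).right q) * fInv (r.right i))))]
        exact Finset.sum_congr rfl fun j _ => Finset.sum_congr rfl fun q _ =>
          (hL₂app _ _ _).symm
    _ = ∑ j ∈ s.index, ∑ q ∈ (sl j).index,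
          L₂ ((sl j).left q ⊗ₜ[k] ((sl j).right q ⊗ₜ[k] s.right j)) := by
        have key := Coalgebra.sum_tmul_tmul_eq (R := k) s sl sr
        have := congrArg L₂ key
        simpa only [map_sum] using this.symm
    _ = ∑ i ∈ r.index, ∑ p ∈ (rl i).index, ∑ j ∈ s.index, ∑ q ∈ (sl j).index,
          fInv (γ ((rl i).left p ⊗ₜ[k] (sl j).left q)) *
            (f (γ ((rl i).right p ⊗ₜ[k] (sl j).right q)) *
              (𝒮 (s.right j) * fInv (r.right i))) := by
        rw [aux_sum4 r.index (fun i => (rl i).index) s.index (fun j => (sl j).index)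
          (fun i p j q => fInv (γ ((rl i).left p ⊗ₜ[k] (sl j).left q)) *
            (f (γ ((rl i).right p ⊗ₜ[k] (sl j).right q)) *
              (𝒮 (s.right j) * fInv (r.right i))))]
        exact Finset.sum_congr rfl fun j _ => Finset.sum_congr rfl fun q _ => hL₂app _ _ _
    _ = ∑ i ∈ r.index, ∑ j ∈ s.index,
          (εC (r.left i) * εH (s.left j)) • (𝒮 (s.right j) * fInv (r.right i)) := by
        refine Finset.sum_congr rfl fun i _ => ?_
        rw [Finset.sum_comm]
        refine Finset.sum_congr rfl fun j _ => ?_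
        rw [show (∑ p ∈ (rl i).index, ∑ q ∈ (sl j).index,
              fInv (γ ((rl i).left p ⊗ₜ[k] (sl j).left q)) *
                (f (γ ((rl i).right p ⊗ₜ[k] (sl j).right q)) *
                  (𝒮 (s.right j) * fInv (r.right i))))
            = (∑ p ∈ (rl i).index, ∑ q ∈ (sl j).index,
                fInv (γ ((rl i).left p ⊗ₜ[k] (sl j).left q)) *
                  f (γ ((rl i).right p ⊗ₜ[k] (sl j).right q))) *
                (𝒮 (s.right j) * fInv (r.right i)) by
            simp [Finset.sum_mul, mul_assoc]]
        rw [aux_F1 γ f fInv hγ_comul hγ_counit hconv₁ (r.left i) (s.left j) (rl i) (sl j),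
          smul_mul_assoc, one_mul]
    _ = 𝒮 h * fInv c := by
        have : ∀ i ∈ r.index, ∑ j ∈ s.index,
            (εC (r.left i) * εH (s.left j)) • (𝒮 (s.right j) * fInv (r.right i))
            = 𝒮 h * (εC (r.left i) • fInv (r.right i)) := by
          intro i _
          have : ∀ j ∈ s.index,
              (εC (r.left i) * εH (s.left j)) • (𝒮 (s.right j) * fInv (r.right i))
              = (εH (s.left j) • 𝒮 (s.right j)) * (εC (r.left i) • fInv (r.right i)) := by
            intro j _
            rw [smul_mul_smul_comm, mul_comm (εH (s.left j))]
          rw [Finset.sum_congr rfl this, ← Finset.sum_mul]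
          congr 1
          calc ∑ j ∈ s.index, εH (s.left j) • 𝒮 (s.right j)
              = 𝒮 (∑ j ∈ s.index, εH (s.left j) • s.right j) := by simp [map_sum]
            _ = 𝒮 h := by rw [aux_sum_counit_smul h s]
        rw [Finset.sum_congr rfl this, ← Finset.mul_sum]
        congr 1
        calc ∑ i ∈ r.index, εC (r.left i) • fInv (r.right i)
            = fInv (∑ i ∈ r.index, εC (r.left i) • r.right i) := by simp [map_sum]
          _ = fInv c := by rw [aux_sum_counit_smul c r]

end AuxProof3
section AuxProof4
open Coalgebra

variable (γ : C ⊗[k] H →ₗ[k] C) (f fInv : C →ₗ[k] H)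

lemma auxB
    (hγ_assoc : γ ∘ₗ lTensor C mulH =
      γ ∘ₗ rTensor H γ ∘ₗ (TensorProduct.assoc k C H H).symm.toLinearMap)
    (hγ_comul : ΔC ∘ₗ γ = TensorProduct.map γ γ ∘ₗ
      (tensorTensorTensorComm k C C H H).toLinearMap ∘ₗ TensorProduct.map ΔC Δ)
    (hγ_counit : εC ∘ₗ γ = LinearMap.mul' k k ∘ₗ TensorProduct.map εC εH)
    (hf_mod : f ∘ₗ γ = mulH ∘ₗ rTensor H f)
    (hconv₁ : mulH ∘ₗ TensorProduct.map fInv f ∘ₗ ΔC = Algebra.linearMap k H ∘ₗ εC)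
    (hconv₂ : mulH ∘ₗ TensorProduct.map f fInv ∘ₗ ΔC = Algebra.linearMap k H ∘ₗ εC)
    (c : C) (h : H) :
    γ ((lTensor C fInv) (ΔC (γ (c ⊗ₜ[k] h)))) = εH h • γ ((lTensor C fInv) (ΔC c)) := by
  classical
  set r : Coalgebra.Repr k c _ := ℛ k c with hrdef
  set s : Coalgebra.Repr k h _ := ℛ k h with hsdef
  rw [aux_comul_gamma γ hγ_comul c h r s]
  simp only [map_sum, lTensor_tmul]
  calc ∑ i ∈ r.index, ∑ j ∈ s.index,
        γ (γ (r.left i ⊗ₜ[k] s.left j) ⊗ₜ[k] fInv (γ (r.right i ⊗ₜ[k] s.right j)))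
      = ∑ i ∈ r.index, ∑ j ∈ s.index,
          γ (r.left i ⊗ₜ[k] ((s.left j * 𝒮 (s.right j)) * fInv (r.right i))) := by
        refine Finset.sum_congr rfl fun i _ => Finset.sum_congr rfl fun j _ => ?_
        rw [auxA γ f fInv hγ_comul hγ_counit hf_mod hconv₁ hconv₂,
          ← aux_hA γ hγ_assoc, ← mul_assoc]
    _ = ∑ i ∈ r.index, γ (r.left i ⊗ₜ[k] ((εH h • (1 : H)) * fInv (r.right i))) := by
        refine Finset.sum_congr rfl fun i _ => ?_
        rw [← HopfAlgebra.sum_mul_antipode_eq_smul s]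
        simp only [Finset.sum_mul, TensorProduct.tmul_sum, map_sum]
    _ = εH h • γ ((lTensor C fInv) (ΔC c)) := by
        rw [← r.eq]
        simp [map_sum, smul_mul_assoc, one_mul, TensorProduct.tmul_smul, Finset.smul_sum]

lemma auxC
    (hγ_assoc : γ ∘ₗ lTensor C mulH =
      γ ∘ₗ rTensor H γ ∘ₗ (TensorProduct.assoc k C H H).symm.toLinearMap)
    (hγ_one : ∀ c : C, γ (c ⊗ₜ[k] (1 : H)) = c)
    (hconv₁ : mulH ∘ₗ TensorProduct.map fInv f ∘ₗ ΔC = Algebra.linearMap k H ∘ₗ εC)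
    (a : C) {ι : Type*} (r : Coalgebra.Repr k a ι) :
    ∑ i ∈ r.index, γ (γ ((lTensor C fInv) (ΔC (r.left i))) ⊗ₜ[k] f (r.right i)) = a := by
  classical
  set rl : (i : r.ι) → Coalgebra.Repr k (r.left i) _ := fun i => ℛ k (r.left i) with hrl
  set rr : (i : r.ι) → Coalgebra.Repr k (r.right i) _ := fun i => ℛ k (r.right i) with hrr
  set L₃ : C ⊗[k] (C ⊗[k] C) →ₗ[k] C :=
    γ ∘ₗ lTensor C (mulH ∘ₗ TensorProduct.map fInv f) with hL₃
  have hL₃app : ∀ c₁ c₂ c₃ : C, L₃ (c₁ ⊗ₜ[k] (c₂ ⊗ₜ[k] c₃)) =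
      γ (c₁ ⊗ₜ[k] (fInv c₂ * f c₃)) := by
    intro c₁ c₂ c₃
    simp [hL₃, LinearMap.mul'_apply]
  calc ∑ i ∈ r.index, γ (γ ((lTensor C fInv) (ΔC (r.left i))) ⊗ₜ[k] f (r.right i))
      = ∑ i ∈ r.index, ∑ p ∈ (rl i).index,
          γ ((rl i).left p ⊗ₜ[k] (fInv ((rl i).right p) * f (r.right i))) := by
        refine Finset.sum_congr rfl fun i _ => ?_
        rw [← (rl i).eq]
        simp only [map_sum, lTensor_tmul, TensorProduct.sum_tmul]
        exact Finset.sum_congr rfl fun p _ => (aux_hA γ hγ_assoc _ _ _).symm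
    _ = ∑ i ∈ r.index, ∑ p ∈ (rl i).index,
          L₃ ((rl i).left p ⊗ₜ[k] ((rl i).right p ⊗ₜ[k] r.right i)) := by
        exact Finset.sum_congr rfl fun i _ => Finset.sum_congr rfl fun p _ =>
          (hL₃app _ _ _).symm
    _ = ∑ i ∈ r.index, ∑ q ∈ (rr i).index,
          L₃ (r.left i ⊗ₜ[k] ((rr i).left q ⊗ₜ[k] (rr i).right q)) := by
        have key := Coalgebra.sum_tmul_tmul_eq (R := k) r rl rr
        have := congrArg L₃ key
        simpa only [map_sum] using this
    _ = ∑ i ∈ r.index, γ (r.left i ⊗ₜ[k] (εC (r.right i) • (1 : H))) := by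
        refine Finset.sum_congr rfl fun i _ => ?_
        rw [← aux_conv₁ f fInv hconv₁ (r.right i) (rr i)]
        simp [hL₃app, TensorProduct.tmul_sum, map_sum]
    _ = a := by
        simp only [TensorProduct.tmul_smul, map_smul, hγ_one]
        exact aux_sum_smul_counit a r

lemma aux_psi (c c' : C) {ι : Type*} (r : Coalgebra.Repr k c ι) :
    psiMap f fInv (c ⊗ₜ[k] c') =
      ∑ i ∈ r.index, r.left i ⊗ₜ[k] (fInv (r.right i) * f c') := by
  simp only [psiMap, LinearMap.comp_apply, rTensor_tmul]
  rw [← r.eq]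
  simp [TensorProduct.sum_tmul, map_sum, TensorProduct.assoc_tmul, LinearMap.mul'_apply]

lemma aux_can (a : C) (hh : H) {ι : Type*} (ra : Coalgebra.Repr k a ι) :
    canMapC γ (a ⊗ₜ[k] hh) =
      ∑ p ∈ ra.index, ra.left p ⊗ₜ[k] γ (ra.right p ⊗ₜ[k] hh) := by
  simp only [canMapC, LinearMap.comp_apply, rTensor_tmul]
  rw [← ra.eq]
  simp [TensorProduct.sum_tmul, map_sum, TensorProduct.assoc_tmul]

end AuxProof4

open Coalgebra in

/-- For a cleft Hopf Galois coextension `C(D)_H` with convolution invertible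
total cointegral `f : C → H`, the inverse of the canonical map is
`can⁻¹ (c ⊗ c') = c⑴ ⊗ f⁻¹ c⑵ * f c'`; in particular
`κ (c ⊗ c') = (ε ⊗ id) (can⁻¹ (c ⊗ c')) = f⁻¹ c * f c'`. -/
theorem cleft_coextension_canonical_map_inverse
    (γ : C ⊗[k] H →ₗ[k] C)
    (hγ_assoc : γ ∘ₗ lTensor C mulH =
      γ ∘ₗ rTensor H γ ∘ₗ (TensorProduct.assoc k C H H).symm.toLinearMap)
    (hγ_one : ∀ c : C, γ (c ⊗ₜ[k] (1 : H)) = c)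
    (hγ_comul : ΔC ∘ₗ γ = TensorProduct.map γ γ ∘ₗ
      (tensorTensorTensorComm k C C H H).toLinearMap ∘ₗ TensorProduct.map ΔC Δ)
    (hγ_counit : εC ∘ₗ γ = LinearMap.mul' k k ∘ₗ TensorProduct.map εC εH)
    (hGal_inj : Function.Injective (canMapC γ))
    (hGal_ran : LinearMap.range (canMapC γ) = cotensorC γ)
    (f : C →ₗ[k] H) (hf_counit : εH ∘ₗ f = εC)
    (hf_mod : f ∘ₗ γ = mulH ∘ₗ rTensor H f)
    (fInv : C →ₗ[k] H)
    (hconv₁ : mulH ∘ₗ TensorProduct.map fInv f ∘ₗ ΔC = Algebra.linearMap k H ∘ₗ εC)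
    (hconv₂ : mulH ∘ₗ TensorProduct.map f fInv ∘ₗ ΔC = Algebra.linearMap k H ∘ₗ εC)
 :
    (∀ x ∈ cotensorC γ, canMapC γ (psiMap f fInv x) = x) ∧
    (∀ x ∈ cotensorC γ,
      (TensorProduct.lid k H) (rTensor H εC (psiMap f fInv x)) =
        (mulH ∘ₗ TensorProduct.map fInv f) x) := by
  classical
  have hker : modIdeal γ ≤ LinearMap.ker (γ ∘ₗ lTensor C fInv ∘ₗ ΔC) := by
    rw [modIdeal, Submodule.span_le]
    rintro x ⟨c, h, rfl⟩
    simp only [SetLike.mem_coe, LinearMap.mem_ker, map_sub, map_smul, LinearMap.comp_apply]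
    rw [auxB γ f fInv hγ_assoc hγ_comul hγ_counit hf_mod hconv₁ hconv₂]
    simp
  set βb : (C ⧸ modIdeal γ) →ₗ[k] C :=
    (modIdeal γ).liftQ (γ ∘ₗ lTensor C fInv ∘ₗ ΔC) hker with hβb
  have hβb_apply : ∀ x : C, βb ((modIdeal γ).mkQ x) = γ ((lTensor C fInv) (ΔC x)) := by
    intro x
    simp [hβb, Submodule.liftQ_apply]
  set G : C ⊗[k] ((C ⧸ modIdeal γ) ⊗[k] C) →ₗ[k] C ⊗[k] C :=
    lTensor C (γ ∘ₗ TensorProduct.map βb f) with hG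
  have claim1 : canMapC γ ∘ₗ psiMap f fInv =
      G ∘ₗ (TensorProduct.assoc k C (C ⧸ modIdeal γ) C).toLinearMap ∘ₗ
        rTensor C (lTensor C (modIdeal γ).mkQ ∘ₗ ΔC) := by
    apply TensorProduct.ext'
    intro c c'
    set r : Coalgebra.Repr k c _ := ℛ k c with hrdef
    set rl : (i : r.ι) → Coalgebra.Repr k (r.left i) _ := fun i => ℛ k (r.left i) with hrl
    set rr : (i : r.ι) → Coalgebra.Repr k (r.right i) _ := fun i => ℛ k (r.right i) with hrr
    set L₄ : C ⊗[k] (C ⊗[k] C) →ₗ[k] C ⊗[k] C :=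
      lTensor C (γ ∘ₗ lTensor C (LinearMap.mulRight k (f c') ∘ₗ fInv)) with hL₄
    have hL₄app : ∀ c₁ c₂ c₃ : C, L₄ (c₁ ⊗ₜ[k] (c₂ ⊗ₜ[k] c₃)) =
        c₁ ⊗ₜ[k] γ (c₂ ⊗ₜ[k] (fInv c₃ * f c')) := by
      intro c₁ c₂ c₃
      simp [hL₄, LinearMap.mulRight_apply]
    have lhs_eq : (canMapC γ ∘ₗ psiMap f fInv) (c ⊗ₜ[k] c') =
        ∑ i ∈ r.index, ∑ p ∈ (rl i).index,
          L₄ ((rl i).left p ⊗ₜ[k] ((rl i).right p ⊗ₜ[k] r.right i)) := by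
      rw [LinearMap.comp_apply, aux_psi f fInv c c' r, map_sum]
      refine Finset.sum_congr rfl fun i _ => ?_
      rw [aux_can γ (r.left i) (fInv (r.right i) * f c') (rl i)]
      exact Finset.sum_congr rfl fun p _ => (hL₄app _ _ _).symm
    have rhs_eq : (G ∘ₗ (TensorProduct.assoc k C (C ⧸ modIdeal γ) C).toLinearMap ∘ₗ
        rTensor C (lTensor C (modIdeal γ).mkQ ∘ₗ ΔC)) (c ⊗ₜ[k] c') =
        ∑ i ∈ r.index, ∑ q ∈ (rr i).index,
          L₄ (r.left i ⊗ₜ[k] ((rr i).left q ⊗ₜ[k] (rr i).right q)) := by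
      simp only [LinearMap.comp_apply, rTensor_tmul]
      rw [← r.eq]
      simp only [map_sum, lTensor_tmul, TensorProduct.sum_tmul, LinearEquiv.coe_coe,
        TensorProduct.assoc_tmul]
      refine Finset.sum_congr rfl fun i _ => ?_
      rw [hG]
      simp only [lTensor_tmul, LinearMap.comp_apply, TensorProduct.map_tmul,
        LinearEquiv.coe_coe, TensorProduct.assoc_tmul]
      rw [hβb_apply (r.right i), ← (rr i).eq]
      simp only [map_sum, lTensor_tmul, TensorProduct.sum_tmul, TensorProduct.tmul_sum]
      refine Finset.sum_congr rfl fun q _ => ?_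
      rw [hL₄app]
      congr 1
      exact (aux_hA γ hγ_assoc _ _ _).symm
    rw [lhs_eq, rhs_eq]
    have key := Coalgebra.sum_tmul_tmul_eq (R := k) r rl rr
    have := congrArg L₄ key
    simpa only [map_sum] using this
  have claim2 : G ∘ₗ lTensor C (rTensor C (modIdeal γ).mkQ ∘ₗ ΔC) = LinearMap.id := by
    apply TensorProduct.ext'
    intro c c'
    set r : Coalgebra.Repr k c' _ := ℛ k c' with hrdef
    simp only [LinearMap.comp_apply, lTensor_tmul, LinearMap.id_apply]
    rw [← r.eq]
    simp only [map_sum, rTensor_tmul, TensorProduct.tmul_sum]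
    rw [hG]
    simp only [lTensor_tmul, LinearMap.comp_apply, TensorProduct.map_tmul]
    have : ∀ i ∈ r.index, c ⊗ₜ[k] γ (βb ((modIdeal γ).mkQ (r.left i)) ⊗ₜ[k] f (r.right i)) =
        c ⊗ₜ[k] γ (γ ((lTensor C fInv) (ΔC (r.left i))) ⊗ₜ[k] f (r.right i)) := by
      intro i _
      rw [hβb_apply]
    rw [Finset.sum_congr rfl this, ← TensorProduct.tmul_sum,
      auxC γ f fInv hγ_assoc hγ_one hconv₁ c' r]
  constructor
  · intro x hx
    rw [cotensorC, LinearMap.mem_ker, LinearMap.sub_apply, sub_eq_zero] at hx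
    have e1 := LinearMap.congr_fun claim1 x
    simp only [LinearMap.comp_apply] at e1
    have e2 := LinearMap.congr_fun claim2 x
    simp only [LinearMap.comp_apply, LinearMap.id_apply] at e2
    rw [e1]
    simp only [LinearMap.comp_apply] at hx
    rw [hx, e2]
  · intro x _
    have main : (TensorProduct.lid k H).toLinearMap ∘ₗ rTensor H εC ∘ₗ psiMap f fInv =
        mulH ∘ₗ TensorProduct.map fInv f := by
      apply TensorProduct.ext'
      intro c c'
      set r : Coalgebra.Repr k c _ := ℛ k c with hrdef
      simp only [LinearMap.comp_apply]
      rw [aux_psi f fInv c c' r]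
      simp only [map_sum, rTensor_tmul, LinearEquiv.coe_coe, TensorProduct.lid_tmul,
        TensorProduct.map_tmul, LinearMap.mul'_apply]
      calc ∑ i ∈ r.index, εC (r.left i) • (fInv (r.right i) * f c')
          = (∑ i ∈ r.index, εC (r.left i) • fInv (r.right i)) * f c' := by
            rw [Finset.sum_mul]
            exact Finset.sum_congr rfl fun i _ => by rw [smul_mul_assoc]
        _ = fInv c * f c' := by
            congr 1
            calc ∑ i ∈ r.index, εC (r.left i) • fInv (r.right i)
                = fInv (∑ i ∈ r.index, εC (r.left i) • r.right i) := by simp [map_sum]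
              _ = fInv c := by rw [aux_sum_counit_smul c r]
    have := LinearMap.congr_fun main x
    simpa only [LinearMap.comp_apply, LinearEquiv.coe_coe] using this
end
end
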